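/- arXiv:1909.04248 — 3 statements merged into one kernel-verified Lean document; each statement's English description precedes it below -/
import Mathlib

section
/- Let γ ∈ (0,1), α := (0.9/8)·(1 + 1/(0.9·γ))⁻¹, let M̄ > 0 and M ≥ M̄, and let C : ℕ → ℝ satisfy 0 ≤ C_j ≤ M̄ for all j. Define C^avg_k := (1/(k+1))·∑_{j=0}^{k} C_j, M_0 := γ·M, M_k := max{ C^avg_{k−1}/α, γ·M } for k ≥ 1; define A_0 := 0, a_k := (1 + √(1 + 4·M_k·A_k))/(2·M_k), A_{k+1} := A_k + a_k; and define 𝒢_k := { i : 0 ≤ i ≤ k−1 and C_i ≤ 0.9·M_i }. Then for every k ≥ 12: ∑_{i ∈ 𝒢_k} A_{i+1}/M_i ≥ k³/(3402·M_k²). -/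
/-!
Each step size `a_k` is the positive root of `M_k a² = a + A_k`, which gives
`√A_{k+1} ≥ √A_k + 1/(2√M_k)`. For `i ≥ 1`, `i·M_i = max(∑_{j<i} C_j/α, iγM)` is nondecreasing
in `i`, so `j·M_j ≤ k·M_k` for `j ≤ k`; summing the square-root increments yields
`A_{i+1} ≥ i³/(9kM_k)`, hence `A_{i+1}/M_i ≥ i⁴/(9k²M_k²)` for every `i < k`.

A bad index `i` has `0.9·γM ≤ 0.9·M_i < C_i ≤ M̄`, and the second inequality also gives
`∑_{j<i} C_j ≤ α·i·M_i ≤ αkM̄/0.9`. Comparing these at the last bad index, and using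
`8α ≤ 0.81γ`, there are at most `1 + k/8` bad indices. The at least `7k/8 - 1` good ones then
contribute at least `∑_{i<|𝒢_k|} i⁴/(9k²M_k²) ≥ (|𝒢_k| - 1)⁵/(45k²M_k²)`.
-/

open Finset Real

theorem Finset.sum_range_card_le_sum {β : Type*} [AddCommMonoid β] [PartialOrder β]
    [IsOrderedAddMonoid β] {f : ℕ → β} (hf : Monotone f) (s : Finset ℕ) :
    ∑ i ∈ range #s, f i ≤ ∑ i ∈ s, f i := by
  induction s using Finset.induction_on_max with
  | empty => simp
  | insert a s has ih =>
    have ha : a ∉ s := fun h => lt_irrefl a (has a h)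
    have hcard : #s ≤ a := by
      simpa using card_le_card fun x hx => mem_range.2 (has x hx)
    rw [card_insert_of_notMem ha, sum_range_succ, sum_insert ha, add_comm (f a)]
    exact add_le_add ih (hf hcard)

theorem Finset.mul_card_sub_one_le_of_sum_range_le {C : ℕ → ℝ} (hC : ∀ j, 0 ≤ C j)
    {s : Finset ℕ} {c D : ℝ} (hc0 : 0 ≤ c) (hD : 0 ≤ D) (hc : ∀ i ∈ s, c ≤ C i)
    (hsum : ∀ i ∈ s, ∑ j ∈ range i, C j ≤ D) : c * (#s - 1) ≤ D := by
  induction s using Finset.induction_on_max with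
  | empty =>
    simp only [card_empty, Nat.cast_zero, zero_sub, mul_neg, mul_one]
    linarith
  | insert a s has _ =>
    have ha : a ∉ s := fun h => lt_irrefl a (has a h)
    rw [card_insert_of_notMem ha, Nat.cast_succ, add_sub_cancel_right]
    calc c * #s ≤ ∑ j ∈ s, C j := by
          rw [mul_comm, ← nsmul_eq_mul]
          exact card_nsmul_le_sum s C c fun i hi => hc i (mem_insert_of_mem hi)
      _ ≤ ∑ j ∈ range a, C j :=
          sum_le_sum_of_subset_of_nonneg (fun x hx => mem_range.2 (has x hx))
            fun j _ _ => hC j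
      _ ≤ D := hsum a (mem_insert_self a s)

theorem two_thirds_mul_sqrt_le_sum_sqrt (m : ℕ) :
    2 / 3 * m * √m ≤ ∑ j ∈ range (m + 1), √(j : ℝ) := by
  induction m with
  | zero => simp
  | succ m ih =>
    rw [sum_range_succ]
    push_cast
    have hu := sq_sqrt (by positivity : (0 : ℝ) ≤ m + 1)
    have hv := sq_sqrt (Nat.cast_nonneg (α := ℝ) m)
    have hvu : √(m : ℝ) ≤ √(m + 1) := sqrt_le_sqrt (by linarith)
    nlinarith [sqrt_nonneg (m : ℝ), mul_nonneg (sqrt_nonneg (m : ℝ)) (sub_nonneg.2 hvu),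
      sq_nonneg (√(m + 1 : ℝ) - √m)]

theorem sub_one_pow_five_div_five_le_sum_pow_four (m : ℕ) :
    ((m : ℝ) - 1) ^ 5 / 5 ≤ ∑ i ∈ range m, (i : ℝ) ^ 4 := by
  induction m with
  | zero => norm_num
  | succ m ih =>
    rw [sum_range_succ]
    push_cast
    rcases Nat.eq_zero_or_pos m with rfl | hm
    · norm_num
    · have hm1 : (1 : ℝ) ≤ m := by exact_mod_cast hm
      nlinarith [sq_nonneg ((m : ℝ) - 1), sq_nonneg (m : ℝ)]

theorem sqrt_div_two_sqrt_le_one_div_two_sqrt {x m K : ℝ} (hx : 0 ≤ x) (hm : 0 < m)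
    (h : x * m ≤ K) : √x / (2 * √K) ≤ 1 / (2 * √m) := by
  rcases le_or_gt K 0 with hK | hK
  · simp [sqrt_eq_zero'.2 hK]
  rw [div_le_div_iff₀ (by positivity) (by positivity), one_mul, mul_left_comm,
    ← sqrt_mul hx]
  gcongr

noncomputable def stepSize (L A : ℝ) : ℝ := (1 + √(1 + 4 * L * A)) / (2 * L)

theorem stepSize_nonneg {L : ℝ} (hL : 0 ≤ L) (A : ℝ) : 0 ≤ stepSize L A := by
  unfold stepSize
  positivity

theorem sqrt_add_inv_two_sqrt_le_sqrt_add_stepSize {L A : ℝ} (hL : 0 < L) (hA : 0 ≤ A) :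
    √A + 1 / (2 * √L) ≤ √(A + stepSize L A) := by
  unfold stepSize
  -- `√(1 + 4LA) ≥ 2√(LA)`, and `(√A + 1/(2√L))² = A + √(A/L) + 1/(4L)`
  have hroot : 2 * (√L * √A) ≤ √(1 + 4 * L * A) := by
    apply le_sqrt_of_sq_le
    nlinarith [sq_sqrt hL.le, sq_sqrt hA]
  have hsq : (√A + 1 / (2 * √L)) ^ 2 = A + (1 + 2 * (√L * √A)) / (2 * L) - 1 / (4 * L) := by
    field_simp
    linear_combination 16 * L * √L ^ 2 * sq_sqrt hA - (16 * √A * √L + 4) * sq_sqrt hL.le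
  have hle : (1 + 2 * (√L * √A)) / (2 * L) ≤ (1 + √(1 + 4 * L * A)) / (2 * L) := by gcongr
  apply le_sqrt_of_sq_le
  have : 0 ≤ 1 / (4 * L) := by positivity
  linarith

section AcceleratedSequence

variable {L A : ℕ → ℝ}

theorem nonneg_of_stepSize (hL : ∀ i, 0 < L i) (hA0 : 0 ≤ A 0)
    (hA : ∀ i, A (i + 1) = A i + stepSize (L i) (A i)) (i : ℕ) : 0 ≤ A i := by
  induction i with
  | zero => exact hA0
  | succ i ih =>
    rw [hA i]
    exact add_nonneg ih (stepSize_nonneg (hL i).le _)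

theorem sum_inv_two_sqrt_le_sqrt_of_stepSize (hL : ∀ i, 0 < L i) (hA0 : 0 ≤ A 0)
    (hA : ∀ i, A (i + 1) = A i + stepSize (L i) (A i)) (n : ℕ) :
    ∑ j ∈ range n, 1 / (2 * √(L j)) ≤ √(A n) :=
  calc ∑ j ∈ range n, 1 / (2 * √(L j)) ≤ ∑ j ∈ range n, (√(A (j + 1)) - √(A j)) := by
        gcongr with j
        rw [le_sub_iff_add_le', hA j]
        exact sqrt_add_inv_two_sqrt_le_sqrt_add_stepSize (hL j)
          (nonneg_of_stepSize hL hA0 hA j)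
    _ = √(A n) - √(A 0) := sum_range_sub (fun j => √(A j)) n
    _ ≤ √(A n) := sub_le_self _ (sqrt_nonneg _)

theorem pow_three_div_le_of_stepSize (hL : ∀ i, 0 < L i) (hA0 : 0 ≤ A 0)
    (hA : ∀ i, A (i + 1) = A i + stepSize (L i) (A i)) {K : ℝ} (hK : 0 < K) {i : ℕ}
    (hLK : ∀ j ≤ i, j * L j ≤ K) : (i : ℝ) ^ 3 / (9 * K) ≤ A (i + 1) := by
  have hsqrt : 2 / 3 * i * √i / (2 * √K) ≤ √(A (i + 1)) :=
    calc 2 / 3 * i * √i / (2 * √K) ≤ (∑ j ∈ range (i + 1), √(j : ℝ)) / (2 * √K) := by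
          gcongr
          exact two_thirds_mul_sqrt_le_sum_sqrt i
      _ = ∑ j ∈ range (i + 1), √(j : ℝ) / (2 * √K) := sum_div _ _ _
      _ ≤ ∑ j ∈ range (i + 1), 1 / (2 * √(L j)) := by
          refine sum_le_sum fun j hj => ?_
          exact sqrt_div_two_sqrt_le_one_div_two_sqrt (Nat.cast_nonneg j) (hL j)
            (by simpa [mul_comm] using hLK j (mem_range_succ_iff.1 hj))
      _ ≤ √(A (i + 1)) := sum_inv_two_sqrt_le_sqrt_of_stepSize hL hA0 hA (i + 1)
  calc (i : ℝ) ^ 3 / (9 * K) = (2 / 3 * i * √i / (2 * √K)) ^ 2 := by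
        field_simp
        rw [sq_sqrt (Nat.cast_nonneg i), sq_sqrt hK.le]
        ring
    _ ≤ √(A (i + 1)) ^ 2 := by gcongr
    _ = A (i + 1) := sq_sqrt (nonneg_of_stepSize hL hA0 hA _)

theorem pow_four_div_le_div_of_stepSize (hL : ∀ i, 0 < L i) (hA0 : 0 ≤ A 0)
    (hA : ∀ i, A (i + 1) = A i + stepSize (L i) (A i)) {K : ℝ} (hK : 0 < K) {i : ℕ}
    (hLK : ∀ j ≤ i, j * L j ≤ K) : (i : ℝ) ^ 4 / (9 * K ^ 2) ≤ A (i + 1) / L i := by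
  rcases Nat.eq_zero_or_pos i with rfl | hi
  · simpa using div_nonneg (nonneg_of_stepSize hL hA0 hA 1) (hL 0).le
  have hi : (0 : ℝ) < i := by exact_mod_cast hi
  have hLi : L i ≤ K / i := by
    rw [le_div_iff₀ hi, mul_comm]
    exact hLK i le_rfl
  calc (i : ℝ) ^ 4 / (9 * K ^ 2) = (i : ℝ) ^ 3 / (9 * K) / (K / i) := by
        field_simp
    _ ≤ (i : ℝ) ^ 3 / (9 * K) / L i := by gcongr; exact hL i
    _ ≤ A (i + 1) / L i := by
        gcongr
        · exact (hL i).le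
        · exact pow_three_div_le_of_stepSize hL hA0 hA hK hLK

end AcceleratedSequence

section ModifiedCurvature

variable {γ α M : ℝ} {C Cavg Mseq : ℕ → ℝ}

theorem le_Mseq (hM0 : Mseq 0 = γ * M)
    (hMk : ∀ k : ℕ, 1 ≤ k → Mseq k = max (Cavg (k - 1) / α) (γ * M)) (i : ℕ) :
    γ * M ≤ Mseq i := by
  rcases Nat.eq_zero_or_pos i with rfl | hi
  · exact hM0.ge
  · rw [hMk i hi]
    exact le_max_right _ _

theorem natCast_mul_Mseq
    (hCavg : ∀ k, Cavg k = (1 / ((k : ℝ) + 1)) * ∑ j ∈ range (k + 1), C j)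
    (hMk : ∀ k : ℕ, 1 ≤ k → Mseq k = max (Cavg (k - 1) / α) (γ * M)) {i : ℕ} (hi : 1 ≤ i) :
    i * Mseq i = max ((∑ j ∈ range i, C j) / α) (i * (γ * M)) := by
  have hi0 : (i : ℝ) ≠ 0 := by positivity
  rw [hMk i hi, mul_max_of_nonneg _ _ (Nat.cast_nonneg i), hCavg, Nat.sub_add_cancel hi,
    Nat.cast_sub hi, Nat.cast_one, sub_add_cancel]
  field_simp

theorem monotone_natCast_mul_Mseq (hα : 0 ≤ α) (hγM : 0 ≤ γ * M) (hC0 : ∀ j, 0 ≤ C j)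
    (hCavg : ∀ k, Cavg k = (1 / ((k : ℝ) + 1)) * ∑ j ∈ range (k + 1), C j)
    (hMk : ∀ k : ℕ, 1 ≤ k → Mseq k = max (Cavg (k - 1) / α) (γ * M)) :
    Monotone fun i : ℕ => (i : ℝ) * Mseq i := by
  refine monotone_nat_of_le_succ fun i => ?_
  rcases Nat.eq_zero_or_pos i with rfl | hi
  · rw [hMk 1 le_rfl]
    simpa using hγM.trans (le_max_right _ _)
  rw [natCast_mul_Mseq hCavg hMk hi, natCast_mul_Mseq hCavg hMk (Nat.le_succ_of_le hi),
    sum_range_succ, Nat.cast_succ]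
  gcongr
  · exact le_add_of_nonneg_right (hC0 i)
  · linarith

theorem sum_range_le_mul_Mseq (hα : 0 < α)
    (hCavg : ∀ k, Cavg k = (1 / ((k : ℝ) + 1)) * ∑ j ∈ range (k + 1), C j)
    (hMk : ∀ k : ℕ, 1 ≤ k → Mseq k = max (Cavg (k - 1) / α) (γ * M)) (i : ℕ) :
    ∑ j ∈ range i, C j ≤ α * (i * Mseq i) := by
  rcases Nat.eq_zero_or_pos i with rfl | hi
  · simp
  rw [← div_le_iff₀' hα, natCast_mul_Mseq hCavg hMk hi]
  exact le_max_left _ _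

theorem card_filter_not_le_le (hγ : 0 < γ) (hM : 0 < M) (hα : 0 < α) (hαγ : 8 * α ≤ 0.81 * γ)
    (hC0 : ∀ j, 0 ≤ C j) (hCM : ∀ j, C j ≤ M)
    (hCavg : ∀ k, Cavg k = (1 / ((k : ℝ) + 1)) * ∑ j ∈ range (k + 1), C j)
    (hM0 : Mseq 0 = γ * M)
    (hMk : ∀ k : ℕ, 1 ≤ k → Mseq k = max (Cavg (k - 1) / α) (γ * M)) (k : ℕ) :
    (#{i ∈ range k | ¬C i ≤ 0.9 * Mseq i} : ℝ) ≤ 1 + k / 8 := by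
  have hbad : ∀ i ∈ ({i ∈ range k | ¬C i ≤ 0.9 * Mseq i} : Finset ℕ),
      i < k ∧ 0.9 * Mseq i < C i := fun i hi => by
    simp only [mem_filter, mem_range, not_le] at hi
    exact hi
  have hcount := mul_card_sub_one_le_of_sum_range_le (c := 0.9 * (γ * M))
    (D := α * (k * (M / 0.9))) hC0 (by positivity) (by positivity)
    (fun i hi => by linarith [(hbad i hi).2, le_Mseq hM0 hMk i])
    (fun i hi => by
      obtain ⟨hik, hi⟩ := hbad i hi
      have hMi : Mseq i ≤ M / 0.9 := by
        rw [le_div_iff₀ (by norm_num)]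
        linarith [hCM i]
      calc ∑ j ∈ range i, C j ≤ α * (i * Mseq i) := sum_range_le_mul_Mseq hα hCavg hMk i
        _ ≤ α * (k * (M / 0.9)) := by
          have := (mul_pos hγ hM).trans_le (le_Mseq hM0 hMk i)
          gcongr)
  set b : ℝ := ((#{i ∈ range k | ¬C i ≤ 0.9 * Mseq i} : ℕ) : ℝ)
  have hγM : 0 < 0.81 * γ * M := by positivity
  have hscaled : 0.81 * γ * M * (b - 1) ≤ 0.81 * γ * M * (k / 8) :=
    calc 0.81 * γ * M * (b - 1) = 0.9 * (0.9 * (γ * M) * (b - 1)) := by ring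
      _ ≤ 0.9 * (α * (k * (M / 0.9))) := by gcongr
      _ = 8 * α * (k * M) / 8 := by ring
      _ ≤ 0.81 * γ * (k * M) / 8 := by gcongr
      _ = 0.81 * γ * M * (k / 8) := by ring
  linarith [le_of_mul_le_mul_left hscaled hγM]

end ModifiedCurvature

theorem eight_mul_curvature_weight_le {γ : ℝ} (hγ : 0 < γ) :
    8 * (0.9 / 8 * (1 + 1 / (0.9 * γ))⁻¹) ≤ 0.81 * γ := by
  have h : (1 + 1 / (0.9 * γ))⁻¹ ≤ 0.9 * γ := by
    have := inv_anti₀ (by positivity : (0 : ℝ) < 1 / (0.9 * γ))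
      (le_add_of_nonneg_left zero_le_one)
    rwa [inv_div, div_one] at this
  linarith

theorem pow_three_div_le_sub_one_pow_five_div {k g m : ℝ} (hk : 12 ≤ k) (hg : 7 / 8 * k - 1 ≤ g)
    (hm : 0 < m) : k ^ 3 / (3402 * m ^ 2) ≤ (g - 1) ^ 5 / 5 / (9 * (k * m) ^ 2) :=
  calc k ^ 3 / (3402 * m ^ 2) = 1 / 3402 * (k ^ 3 / m ^ 2) := by ring
    _ ≤ (17 / 24) ^ 5 / 45 * (k ^ 3 / m ^ 2) :=
        mul_le_mul_of_nonneg_right (by norm_num) (by positivity)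
    _ = (17 / 24 * k) ^ 5 / 5 / (9 * (k * m) ^ 2) := by field_simp; ring
    _ ≤ (g - 1) ^ 5 / 5 / (9 * (k * m) ^ 2) := by gcongr; linarith

theorem stmt8_general (γ : ℝ) (hγ0 : 0 < γ)
    (α : ℝ) (hα : α = 0.9 / 8 * (1 + 1 / (0.9 * γ))⁻¹)
    (Mbar M : ℝ) (hMbar : 0 < Mbar) (hM : Mbar ≤ M)
    (C : ℕ → ℝ) (hC0 : ∀ j, 0 ≤ C j) (hCM : ∀ j, C j ≤ Mbar)
    (Cavg : ℕ → ℝ)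
    (hCavg : ∀ k, Cavg k = (1 / ((k : ℝ) + 1)) * ∑ j ∈ Finset.range (k + 1), C j)
    (Mseq : ℕ → ℝ) (hM0 : Mseq 0 = γ * M)
    (hMk : ∀ k : ℕ, 1 ≤ k → Mseq k = max (Cavg (k - 1) / α) (γ * M))
    (A a : ℕ → ℝ) (hA0 : A 0 = 0)
    (ha : ∀ k, a k = (1 + Real.sqrt (1 + 4 * Mseq k * A k)) / (2 * Mseq k))
    (hA : ∀ k, A (k + 1) = A k + a k)
    (k : ℕ) (hk : 12 ≤ k) :
    ∑ i ∈ (Finset.range k).filter (fun i => C i ≤ 0.9 * Mseq i), A (i + 1) / Mseq i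
      ≥ (k : ℝ) ^ 3 / (3402 * Mseq k ^ 2) := by
  have hMpos : 0 < M := hMbar.trans_le hM
  have hαpos : 0 < α := hα ▸ by positivity
  have hαγ : 8 * α ≤ 0.81 * γ := hα ▸ eight_mul_curvature_weight_le hγ0
  have hMseq : ∀ i, 0 < Mseq i := fun i => (mul_pos hγ0 hMpos).trans_le (le_Mseq hM0 hMk i)
  have hstep : ∀ i, A (i + 1) = A i + stepSize (Mseq i) (A i) := fun i => by rw [hA, ha]; rfl
  have hmono := monotone_natCast_mul_Mseq hαpos.le (by positivity) hC0 hCavg hMk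
  set G := (range k).filter fun i => C i ≤ 0.9 * Mseq i
  have hG : 7 / 8 * (k : ℝ) - 1 ≤ #G := by
    have hsplit :=
      card_filter_add_card_filter_not (s := range k) (p := fun i => C i ≤ 0.9 * Mseq i)
    have hbad := card_filter_not_le_le hγ0 hMpos hαpos hαγ hC0 (fun j => (hCM j).trans hM)
      hCavg hM0 hMk k
    rw [card_range] at hsplit
    have hk' : (k : ℝ) = #G + #{i ∈ range k | ¬C i ≤ 0.9 * Mseq i} := by
      exact_mod_cast hsplit.symm
    linarith
  have hK : 0 < (k : ℝ) * Mseq k := mul_pos (by positivity) (hMseq k)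
  calc (k : ℝ) ^ 3 / (3402 * Mseq k ^ 2) ≤ ((#G : ℝ) - 1) ^ 5 / 5 / (9 * (k * Mseq k) ^ 2) :=
        pow_three_div_le_sub_one_pow_five_div (by exact_mod_cast hk) hG (hMseq k)
    _ ≤ (∑ i ∈ range #G, (i : ℝ) ^ 4) / (9 * (k * Mseq k) ^ 2) := by
        gcongr
        exact sub_one_pow_five_div_five_le_sum_pow_four _
    _ ≤ (∑ i ∈ G, (i : ℝ) ^ 4) / (9 * (k * Mseq k) ^ 2) := by
        gcongr ?_ / _
        exact sum_range_card_le_sum (f := fun i : ℕ => (i : ℝ) ^ 4)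
          (fun a b h => pow_le_pow_left₀ (Nat.cast_nonneg a) (Nat.cast_le.2 h) 4) G
    _ = ∑ i ∈ G, (i : ℝ) ^ 4 / (9 * (k * Mseq k) ^ 2) := sum_div _ _ _
    _ ≤ ∑ i ∈ G, A (i + 1) / Mseq i := sum_le_sum fun i hi =>
        pow_four_div_le_div_of_stepSize hMseq hA0.ge hstep hK fun j hj =>
          hmono (hj.trans (mem_range.1 (mem_filter.1 hi).1).le)

/-- Lemma 8: with `γ ∈ (0,1)`, `α = (0.9/8)(1 + 1/(0.9 γ))⁻¹`, `0 ≤ C_j ≤ M̄ ≤ M`,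
running averages `C^avg`, modified average curvatures `M_0 = γM`,
`M_k = max{C^avg_{k−1}/α, γM}`, accumulated stepsizes `A_0 = 0`,
`a_k = (1 + √(1 + 4 M_k A_k))/(2 M_k)`, `A_{k+1} = A_k + a_k`, and good set
`𝒢_k = {i ≤ k−1 : C_i ≤ 0.9 M_i}`, for every `k ≥ 12`:
`∑_{i ∈ 𝒢_k} A_{i+1}/M_i ≥ k³/(3402 M_k²)`. -/
theorem stmt8 (γ : ℝ) (hγ0 : 0 < γ) (hγ1 : γ < 1)
    (α : ℝ) (hα : α = 0.9 / 8 * (1 + 1 / (0.9 * γ))⁻¹)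
    (Mbar M : ℝ) (hMbar : 0 < Mbar) (hM : Mbar ≤ M)
    (C : ℕ → ℝ) (hC0 : ∀ j, 0 ≤ C j) (hCM : ∀ j, C j ≤ Mbar)
    (Cavg : ℕ → ℝ)
    (hCavg : ∀ k, Cavg k = (1 / ((k : ℝ) + 1)) * ∑ j ∈ Finset.range (k + 1), C j)
    (Mseq : ℕ → ℝ) (hM0 : Mseq 0 = γ * M)
    (hMk : ∀ k : ℕ, 1 ≤ k → Mseq k = max (Cavg (k - 1) / α) (γ * M))
    (A a : ℕ → ℝ) (hA0 : A 0 = 0)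
    (ha : ∀ k, a k = (1 + Real.sqrt (1 + 4 * Mseq k * A k)) / (2 * Mseq k))
    (hA : ∀ k, A (k + 1) = A k + a k)
    (k : ℕ) (hk : 12 ≤ k) :
    ∑ i ∈ (Finset.range k).filter (fun i => C i ≤ 0.9 * Mseq i), A (i + 1) / Mseq i
      ≥ (k : ℝ) ^ 3 / (3402 * Mseq k ^ 2) :=
  stmt8_general γ hγ0 α hα Mbar M hMbar hM C hC0 hCM Cavg hCavg Mseq hM0 hMk A a hA0 ha hA k hk
end

section
/- In the AC-ACG setting, for every k ≥ 0 with C_k ≤ 0.9·M_k (a good iteration) and every u ∈ s: (A_{k+1}/(72.2·M_k))·‖v_{k+1}‖² ≤ η_k(u) − η_{k+1}(u) + (m/2)·a_k·D², where η_j(u) := A_j·(φ(y_j) − φ(u)) + (1/2)·‖u − x_j‖². -/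
/-!
At a good iteration `y_{k+1} = y^g_{k+1}`, and `C_k ≤ 0.9 M_k` yields both the descent inequality
`f(y^g) ≤ ℓ_f(y^g; x̃) + 0.45 M_k ‖y^g - x̃‖²` and `‖v_{k+1}‖ ≤ 1.9 M_k ‖y^g - x̃‖`. Testing the
`y^g`-subproblem at `(A_k y_k + a_k x_{k+1}) / A_{k+1}` and using `M_k a_k² = A_{k+1}` turns its
proximal term into `‖x_{k+1} - x_k‖² / 2`, which the 1-strong convexity of the `x`-subproblem
absorbs; the spare `0.05 M_k ‖y^g - x̃‖²` pays for `‖v_{k+1}‖²`. Finally the linearizations at `x̃`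
are compared with `f` through the lower curvature bound, and the error
`A_k ‖y_k - x̃‖² + a_k ‖u - x̃‖²` is at most `a_k D²` because `x̃` lies on the segment `[y_k, x_k]`.
-/

open Filter Topology Set
open scoped RealInnerProductSpace

section

variable {E : Type*} [NormedAddCommGroup E] [InnerProductSpace ℝ E]

lemma norm_smul_add_smul_sub_sq {a b : ℝ} (hab : a + b = 1) (x y p : E) :
    ‖a • x + b • y - p‖ ^ 2 = a * ‖x - p‖ ^ 2 + b * ‖y - p‖ ^ 2 - a * b * ‖x - y‖ ^ 2 := by
  have hp : a • x + b • y - p = a • (x - p) + b • (y - p) := by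
    calc a • x + b • y - p = a • x + b • y - (a + b) • p := by rw [hab, one_smul]
      _ = a • (x - p) + b • (y - p) := by module
  rw [hp, ← sub_sub_sub_cancel_right x y p]
  generalize x - p = x', y - p = y'
  rw [norm_add_sq_real, norm_sub_sq_real, norm_smul, norm_smul, real_inner_smul_left,
    real_inner_smul_right, mul_pow, mul_pow, Real.norm_eq_abs, Real.norm_eq_abs, sq_abs, sq_abs]
  obtain rfl := eq_sub_of_add_eq' hab
  ring

lemma strongConvexOn_half_norm_sub_sq {s : Set E} (hs : Convex ℝ s) (p : E) :
    StrongConvexOn s 1 fun x ↦ 1 / 2 * ‖x - p‖ ^ 2 := by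
  refine ⟨hs, fun x _ y _ a b _ _ hab ↦ ?_⟩
  dsimp only
  rw [smul_eq_mul, smul_eq_mul, norm_smul_add_smul_sub_sq hab]
  linarith

lemma ConvexOn.strongConvexOn_add_half_norm_sub_sq {s : Set E} {g : E → ℝ} (hg : ConvexOn ℝ s g)
    (p : E) : StrongConvexOn s 1 fun x ↦ g x + 1 / 2 * ‖x - p‖ ^ 2 := by
  have := (uniformConvexOn_zero.2 hg).add (strongConvexOn_half_norm_sub_sq hg.1 p)
  rwa [zero_add] at this

lemma StrongConvexOn.add_mul_norm_sub_sq_le_of_isMinOn {s : Set E} {m : ℝ} {g : E → ℝ}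
    (hg : StrongConvexOn s m g) {z u : E} (hz : z ∈ s) (hu : u ∈ s) (hmin : IsMinOn g s z) :
    g z + m / 2 * ‖u - z‖ ^ 2 ≤ g u := by
  set c := m / 2 * ‖u - z‖ ^ 2 with hc
  have hstep : ∀ t ∈ Ioo (0 : ℝ) 1, g z + c ≤ g u + t * c := by
    rintro t ⟨ht0, ht1⟩
    have hcomb := hg.2 hz hu (sub_nonneg.2 ht1.le) ht0.le (sub_add_cancel 1 t)
    have hle := isMinOn_iff.1 hmin _ (hg.1 hz hu (sub_nonneg.2 ht1.le) ht0.le (sub_add_cancel 1 t))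
    rw [smul_eq_mul, smul_eq_mul, norm_sub_rev] at hcomb
    dsimp only at hcomb
    rw [← hc] at hcomb
    have : t * (g z + c) ≤ t * (g u + t * c) := by linarith
    exact le_of_mul_le_mul_left this ht0
  have hlim : Tendsto (fun t : ℝ ↦ g u + t * c) (𝓝[>] 0) (𝓝 (g u)) := by
    have hcont : Continuous fun t : ℝ ↦ g u + t * c := by fun_prop
    simpa using (hcont.tendsto 0).mono_left nhdsWithin_le_nhds
  exact ge_of_tendsto hlim (eventually_of_mem (Ioo_mem_nhdsGT one_pos) hstep)

lemma le_mul_of_div_le_of_eq_zero {p q c : ℝ} (hq : 0 ≤ q) (hpq : q = 0 → p = 0)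
    (h : p / q ≤ c) : p ≤ c * q := by
  rcases hq.eq_or_lt with hq | hq
  · simp [hpq hq.symm, ← hq]
  · exact (div_le_iff₀ hq).1 h

lemma mul_sq_eq_add_of_eq_quadratic_root {M A a : ℝ} (hM : M ≠ 0) (hA : 0 ≤ 1 + 4 * M * A)
    (ha : a = (1 + √(1 + 4 * M * A)) / (2 * M)) : M * a ^ 2 = A + a := by
  have hsq := Real.sq_sqrt hA
  rw [ha]
  generalize √(1 + 4 * M * A) = r at hsq
  field_simp
  linear_combination hsq

lemma inv_add_smul_add_smul {A a : ℝ} (h : A + a ≠ 0) (y x : E) :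
    (A + a)⁻¹ • (A • y + a • x) = (1 - a / (A + a)) • y + (a / (A + a)) • x := by
  have : 1 - a / (A + a) = A / (A + a) := by field_simp; ring
  rw [this, smul_add, smul_smul, smul_smul, div_eq_inv_mul, div_eq_inv_mul]

lemma Convex.inv_add_smul_add_smul_mem {s : Set E} (hs : Convex ℝ s) {A a : ℝ} (hA : 0 ≤ A)
    (ha : 0 < a) {y x : E} (hy : y ∈ s) (hx : x ∈ s) : (A + a)⁻¹ • (A • y + a • x) ∈ s := by
  have hAa : 0 < A + a := by positivity
  rw [inv_add_smul_add_smul hAa.ne']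
  exact hs hy hx (sub_nonneg.2 ((div_le_one hAa).2 (by linarith))) (by positivity) (by ring)

lemma weighted_norm_sub_sq_le {t D : ℝ} (ht0 : 0 ≤ t) (ht1 : t ≤ 1) {y x u : E}
    (hy : ‖u - y‖ ≤ D) (hx : ‖u - x‖ ≤ D) :
    (1 - t) * ‖y - ((1 - t) • y + t • x)‖ ^ 2 + t * ‖u - ((1 - t) • y + t • x)‖ ^ 2
      ≤ t * D ^ 2 := by
  have hid := norm_smul_add_smul_sub_sq (sub_add_cancel 1 t) y u ((1 - t) • y + t • x)
  have hvec : (1 - t) • y + t • u - ((1 - t) • y + t • x) = t • (u - x) := by module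
  rw [hvec, norm_smul, mul_pow, Real.norm_of_nonneg ht0, norm_sub_rev y u] at hid
  have hy2 : ‖u - y‖ ^ 2 ≤ D ^ 2 := pow_le_pow_left₀ (norm_nonneg _) hy 2
  have hx2 : ‖u - x‖ ^ 2 ≤ D ^ 2 := pow_le_pow_left₀ (norm_nonneg _) hx 2
  have h1t : 0 ≤ (1 - t) * t := mul_nonneg (sub_nonneg.2 ht1) ht0
  linarith [mul_le_mul_of_nonneg_left hy2 h1t, mul_le_mul_of_nonneg_left hx2 (sq_nonneg t)]

/-- The linearization `ℓ_f(u; x)`, with `f'` in the role of `∇f`. -/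
def linModel (f : E → ℝ) (f' : E → E) (x u : E) : ℝ := f x + ⟪f' x, u - x⟫

lemma ConvexOn.linModel_add {s : Set E} {h : E → ℝ} (hh : ConvexOn ℝ s h) (f : E → ℝ)
    (f' : E → E) (x : E) : ConvexOn ℝ s fun u ↦ linModel f f' x u + h u := by
  refine ((((innerₗ E (f' x)).convexOn hh.1).add_const (f x - ⟪f' x, x⟫)).add hh).congr ?_
  intro u _
  simp only [linModel, inner_sub_right, Pi.add_apply, innerₗ_apply_apply]
  ring

variable {s : Set E} {f h : E → ℝ} {f' : E → E}

lemma descent_and_gradient_bound_of_curvature_le {C M : ℝ} {T Z : E}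
    (hC : C = max (2 * (f Z - linModel f f' T Z) / ‖Z - T‖ ^ 2) (‖f' Z - f' T‖ / ‖Z - T‖))
    (hgood : C ≤ 0.9 * M) :
    f Z ≤ linModel f f' T Z + 0.45 * M * ‖Z - T‖ ^ 2 ∧ ‖f' Z - f' T‖ ≤ 0.9 * M * ‖Z - T‖ := by
  -- For `Z = T` the quotients in `C` are junk zeros, but then both bounds hold trivially.
  rw [hC, max_le_iff] at hgood
  have hZT : ‖Z - T‖ = 0 → Z = T := fun h0 ↦ sub_eq_zero.1 (norm_eq_zero.1 h0)
  constructor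
  · have := le_mul_of_div_le_of_eq_zero (by positivity)
      (fun h0 ↦ by simp [hZT (pow_eq_zero_iff two_ne_zero |>.1 h0), linModel]) hgood.1
    linarith
  · exact le_mul_of_div_le_of_eq_zero (norm_nonneg _) (fun h0 ↦ by simp [hZT h0]) hgood.2

lemma div_mul_norm_sq_le {M A : ℝ} {T Z v : E} (hM : 0 < M) (hA : 0 ≤ A)
    (hv : v = M • (T - Z) + f' Z - f' T) (hgrad : ‖f' Z - f' T‖ ≤ 0.9 * M * ‖Z - T‖) :
    A / (72.2 * M) * ‖v‖ ^ 2 ≤ A * M / 20 * ‖Z - T‖ ^ 2 := by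
  have hvn : ‖v‖ ≤ 1.9 * M * ‖Z - T‖ := calc
    ‖v‖ ≤ ‖M • (T - Z)‖ + ‖f' Z - f' T‖ := by rw [hv, add_sub_assoc]; exact norm_add_le _ _
    _ ≤ M * ‖Z - T‖ + 0.9 * M * ‖Z - T‖ := by
      rw [norm_smul, Real.norm_of_nonneg hM.le, norm_sub_rev]; linarith
    _ = 1.9 * M * ‖Z - T‖ := by ring
  -- `72.2 = 20 · 1.9²`
  calc A / (72.2 * M) * ‖v‖ ^ 2 ≤ A / (72.2 * M) * (1.9 * M * ‖Z - T‖) ^ 2 := by gcongr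
    _ = A * M / 20 * ‖Z - T‖ ^ 2 := by field_simp; ring

lemma add_mul_linModel_le_add_mul {m D Ak a : ℝ} (hm : 0 ≤ m) (hAk : 0 ≤ Ak) (ha : 0 < a)
    (hdiam : ∀ u ∈ s, ∀ u' ∈ s, ‖u - u'‖ ≤ D)
    (hlower : ∀ u ∈ s, ∀ u' ∈ s, -(m / 2) * ‖u - u'‖ ^ 2 ≤ f u - f u' - ⟪f' u', u - u'⟫)
    {T Y X u : E} (hY : Y ∈ s) (hX : X ∈ s) (hu : u ∈ s) (hTs : T ∈ s)
    (hT : T = (Ak + a)⁻¹ • (Ak • Y + a • X)) :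
    Ak * linModel f f' T Y + a * linModel f f' T u ≤ Ak * f Y + a * f u + m / 2 * a * D ^ 2 := by
  have hA : 0 < Ak + a := by positivity
  rw [inv_add_smul_add_smul hA.ne'] at hT
  have hcurv : Ak * ‖Y - T‖ ^ 2 + a * ‖u - T‖ ^ 2 ≤ a * D ^ 2 := by
    have hw := weighted_norm_sub_sq_le (div_nonneg ha.le hA.le) ((div_le_one hA).2 (by linarith))
      (hdiam u hu Y hY) (hdiam u hu X hX)
    rw [← hT] at hw
    have := mul_le_mul_of_nonneg_left hw hA.le
    field_simp at this
    linarith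
  have hY' := hlower Y hY T hTs
  have hu' := hlower u hu T hTs
  simp only [linModel]
  linarith [mul_le_mul_of_nonneg_left hY' hAk, mul_le_mul_of_nonneg_left hu' ha.le,
    mul_le_mul_of_nonneg_left hcurv (by positivity : (0 : ℝ) ≤ m / 2)]

lemma mul_linModel_add_le_of_isMinOn {M Ak a : ℝ} (hh : ConvexOn ℝ s h) (hAk : 0 ≤ Ak)
    (ha : 0 < a) (hMa : M * a ^ 2 = Ak + a) {T Y X X' Z : E} (hY : Y ∈ s) (hX' : X' ∈ s)
    (hT : T = (Ak + a)⁻¹ • (Ak • Y + a • X))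
    (hZ : IsMinOn (fun w ↦ linModel f f' T w + h w + M / 2 * ‖w - T‖ ^ 2) s Z) :
    (Ak + a) * (linModel f f' T Z + h Z + M / 2 * ‖Z - T‖ ^ 2)
      ≤ Ak * (linModel f f' T Y + h Y) + a * (linModel f f' T X' + h X')
        + 1 / 2 * ‖X' - X‖ ^ 2 := by
  have hA : 0 < Ak + a := by positivity
  set t := a / (Ak + a) with ht
  have ht0 : 0 ≤ t := by positivity
  have ht1 : 0 ≤ 1 - t := sub_nonneg.2 ((div_le_one hA).2 (by linarith))
  have hwT : (1 - t) • Y + t • X' - T = t • (X' - X) := by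
    rw [hT, inv_add_smul_add_smul hA.ne']; module
  have hconv := (hh.linModel_add f f' T).2 hY hX' ht1 ht0 (sub_add_cancel 1 t)
  have hmin := isMinOn_iff.1 hZ _ (hh.1 hY hX' ht1 ht0 (sub_add_cancel 1 t))
  rw [hwT, norm_smul, mul_pow, Real.norm_of_nonneg ht0] at hmin
  simp only [smul_eq_mul] at hconv
  calc (Ak + a) * (linModel f f' T Z + h Z + M / 2 * ‖Z - T‖ ^ 2)
      ≤ (Ak + a) * ((1 - t) * (linModel f f' T Y + h Y) + t * (linModel f f' T X' + h X')
          + M / 2 * (t ^ 2 * ‖X' - X‖ ^ 2)) := mul_le_mul_of_nonneg_left (by linarith) hA.le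
    _ = _ := by
      have e1 : (Ak + a) * (1 - t) = Ak := by rw [ht]; field_simp; ring
      have e2 : (Ak + a) * t = a := by rw [ht]; field_simp
      have e3 : (Ak + a) * (M / 2 * t ^ 2) = 1 / 2 := by
        rw [ht]; field_simp; linear_combination hMa
      linear_combination (linModel f f' T Y + h Y) * e1 + (linModel f f' T X' + h X') * e2
        + ‖X' - X‖ ^ 2 * e3

theorem potential_decrease_of_good_step {m D M Ak a C : ℝ} (hh : ConvexOn ℝ s h) (hm : 0 ≤ m)
    (hdiam : ∀ u ∈ s, ∀ u' ∈ s, ‖u - u'‖ ≤ D)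
    (hlower : ∀ u ∈ s, ∀ u' ∈ s, -(m / 2) * ‖u - u'‖ ^ 2 ≤ f u - f u' - ⟪f' u', u - u'⟫)
    (hM : 0 < M) (hAk : 0 ≤ Ak) (ha : 0 < a) (hMa : M * a ^ 2 = Ak + a)
    {T Y X X' Z u v : E} (hY : Y ∈ s) (hX : X ∈ s) (hX's : X' ∈ s) (hu : u ∈ s)
    (hT : T = (Ak + a)⁻¹ • (Ak • Y + a • X))
    (hZ : IsMinOn (fun w ↦ linModel f f' T w + h w + M / 2 * ‖w - T‖ ^ 2) s Z)
    (hX' : IsMinOn (fun w ↦ a * (linModel f f' T w + h w) + 1 / 2 * ‖w - X‖ ^ 2) s X')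
    (hv : v = M • (T - Z) + f' Z - f' T)
    (hC : C = max (2 * (f Z - linModel f f' T Z) / ‖Z - T‖ ^ 2) (‖f' Z - f' T‖ / ‖Z - T‖))
    (hgood : C ≤ 0.9 * M) :
    (Ak + a) / (72.2 * M) * ‖v‖ ^ 2
      ≤ (Ak * ((f Y + h Y) - (f u + h u)) + 1 / 2 * ‖u - X‖ ^ 2)
        - ((Ak + a) * ((f Z + h Z) - (f u + h u)) + 1 / 2 * ‖u - X'‖ ^ 2)
        + m / 2 * a * D ^ 2 := by
  have hA : 0 ≤ Ak + a := by positivity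
  have hTs : T ∈ s := by rw [hT]; exact hh.1.inv_add_smul_add_smul_mem hAk ha hY hX
  obtain ⟨hdesc, hgrad⟩ := descent_and_gradient_bound_of_curvature_le hC hgood
  have hvbound := div_mul_norm_sq_le hM hA hv hgrad
  have hgstep := mul_linModel_add_le_of_isMinOn hh hAk ha hMa hY hX's hT hZ
  have hprox := ((hh.linModel_add f f' T).smul ha.le).strongConvexOn_add_half_norm_sub_sq X
    |>.add_mul_norm_sub_sq_le_of_isMinOn hX's hu hX'
  have hlow := add_mul_linModel_le_add_mul hm hAk ha hdiam hlower hY hX hu hTs hT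
  simp only [smul_eq_mul] at hprox
  linarith [mul_le_mul_of_nonneg_left hdesc hA]

end

theorem stmt11_general {E : Type*} [NormedAddCommGroup E] [InnerProductSpace ℝ E]
    (s : Set E)
    (D : ℝ) (hdiam : ∀ u ∈ s, ∀ u' ∈ s, ‖u - u'‖ ≤ D)
    (f : E → ℝ) (f' : E → E)
    (m Mbar : ℝ) (hm : 0 ≤ m) (hMbar : 0 < Mbar)
    (hlower : ∀ u ∈ s, ∀ u' ∈ s,
      -(m / 2) * ‖u - u'‖ ^ 2 ≤ f u - f u' - (inner ℝ (f' u') (u - u') : ℝ))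
    (h : E → ℝ) (hh : ConvexOn ℝ s h)
    (γ M α : ℝ) (hγ0 : 0 < γ) (hMM : Mbar ≤ M)
    (x y yg xt v : ℕ → E) (A a Mseq C Cavg : ℕ → ℝ)
    (hx0 : x 0 ∈ s) (hy0 : y 0 = x 0) (hA0 : A 0 = 0) (hM0 : Mseq 0 = γ * M)
    (ha : ∀ k, a k = (1 + Real.sqrt (1 + 4 * Mseq k * A k)) / (2 * Mseq k))
    (hA : ∀ k, A (k + 1) = A k + a k)
    (hxt : ∀ k, xt k = (A (k + 1))⁻¹ • (A k • y k + a k • x k))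
    (hyg_mem : ∀ k, yg (k + 1) ∈ s)
    (hyg_min : ∀ k, ∀ u ∈ s,
      f (xt k) + (inner ℝ (f' (xt k)) (yg (k + 1) - xt k) : ℝ) + h (yg (k + 1))
          + Mseq k / 2 * ‖yg (k + 1) - xt k‖ ^ 2
        ≤ f (xt k) + (inner ℝ (f' (xt k)) (u - xt k) : ℝ) + h u
          + Mseq k / 2 * ‖u - xt k‖ ^ 2)
    (hx_mem : ∀ k, x (k + 1) ∈ s)
    (hx_min : ∀ k, ∀ u ∈ s,
      a k * (f (xt k) + (inner ℝ (f' (xt k)) (x (k + 1) - xt k) : ℝ) + h (x (k + 1)))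
          + 1 / 2 * ‖x (k + 1) - x k‖ ^ 2
        ≤ a k * (f (xt k) + (inner ℝ (f' (xt k)) (u - xt k) : ℝ) + h u)
          + 1 / 2 * ‖u - x k‖ ^ 2)
    (hv : ∀ k, v (k + 1) = Mseq k • (xt k - yg (k + 1)) + f' (yg (k + 1)) - f' (xt k))
    (hC : ∀ k, C k = max
      (2 * (f (yg (k + 1)) - (f (xt k) + (inner ℝ (f' (xt k)) (yg (k + 1) - xt k) : ℝ)))
        / ‖yg (k + 1) - xt k‖ ^ 2)
      (‖f' (yg (k + 1)) - f' (xt k)‖ / ‖yg (k + 1) - xt k‖))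
    (hMsucc : ∀ k, Mseq (k + 1) = max (Cavg k / α) (γ * M))
    (hy : ∀ k, y (k + 1) =
      if 0.9 * Mseq k < C k then (A (k + 1))⁻¹ • (A k • y k + a k • x (k + 1))
      else yg (k + 1))
     :
    ∀ k : ℕ, C k ≤ 0.9 * Mseq k → ∀ u ∈ s,
      A (k + 1) / (72.2 * Mseq k) * ‖v (k + 1)‖ ^ 2
        ≤ (A k * ((f (y k) + h (y k)) - (f u + h u)) + 1 / 2 * ‖u - x k‖ ^ 2)
          - (A (k + 1) * ((f (y (k + 1)) + h (y (k + 1))) - (f u + h u))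
              + 1 / 2 * ‖u - x (k + 1)‖ ^ 2)
          + m / 2 * a k * D ^ 2 := by
  have hMpos : ∀ k, 0 < Mseq k := by
    have hγM : 0 < γ * M := mul_pos hγ0 (hMbar.trans_le hMM)
    rintro (_ | k)
    · rwa [hM0]
    · exact hγM.trans_le (hMsucc k ▸ le_max_right _ _)
  have hapos : ∀ k, 0 < a k := fun k ↦ by have := hMpos k; rw [ha k]; positivity
  have hAnn : ∀ k, 0 ≤ A k := by
    intro k
    induction k with
    | zero => exact hA0.ge
    | succ k ih => rw [hA k]; exact add_nonneg ih (hapos k).le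
  have hxs : ∀ k, x k ∈ s := by rintro (_ | k); exacts [hx0, hx_mem k]
  have hys : ∀ k, y k ∈ s := by
    intro k
    induction k with
    | zero => rwa [hy0]
    | succ k ih =>
      rw [hy k, hA k]
      split_ifs
      exacts [hh.1.inv_add_smul_add_smul_mem (hAnn k) (hapos k) ih (hx_mem k), hyg_mem k]
  intro k hgood u hu
  have hMk := hMpos k
  have hAk := hAnn k
  have hMa : Mseq k * a k ^ 2 = A k + a k :=
    mul_sq_eq_add_of_eq_quadratic_root hMk.ne' (by positivity) (ha k)
  rw [hy k, if_neg (not_lt.2 hgood), hA k]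
  exact potential_decrease_of_good_step hh hm hdiam hlower hMk hAk (hapos k) hMa
    (hys k) (hxs k) (hx_mem k) hu (hA k ▸ hxt k)
    (isMinOn_iff.2 (hyg_min k)) (isMinOn_iff.2 (hx_min k)) (hv k) (hC k) hgood

/-- Lemma 3(a): potential inequality at good iterations. -/
theorem stmt11 {E : Type*} [NormedAddCommGroup E] [InnerProductSpace ℝ E]
    (s : Set E) (hs : Convex ℝ s) (hsne : s.Nonempty)
    (D : ℝ) (hD : 0 < D) (hdiam : ∀ u ∈ s, ∀ u' ∈ s, ‖u - u'‖ ≤ D)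
    (f : E → ℝ) (f' : E → E) (hf : ∀ z : E, HasFDerivAt f ((innerSL ℝ) (f' z)) z)
    (m Mbar : ℝ) (hm : 0 ≤ m) (hMbar : 0 < Mbar)
    (hlower : ∀ u ∈ s, ∀ u' ∈ s,
      -(m / 2) * ‖u - u'‖ ^ 2 ≤ f u - f u' - (inner ℝ (f' u') (u - u') : ℝ))
    (hlip : ∀ u ∈ s, ∀ u' ∈ s, ‖f' u - f' u'‖ ≤ Mbar * ‖u - u'‖)
    (h : E → ℝ) (hh : ConvexOn ℝ s h)
    (γ M α : ℝ) (hγ0 : 0 < γ) (hγ1 : γ < 1) (hMM : Mbar ≤ M)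
    (hα : α = 0.9 / 8 * (1 + 1 / (0.9 * γ))⁻¹)
    (x y yg xt v : ℕ → E) (A a Mseq C Cavg : ℕ → ℝ)
    (hx0 : x 0 ∈ s) (hy0 : y 0 = x 0) (hA0 : A 0 = 0) (hM0 : Mseq 0 = γ * M)
    (ha : ∀ k, a k = (1 + Real.sqrt (1 + 4 * Mseq k * A k)) / (2 * Mseq k))
    (hA : ∀ k, A (k + 1) = A k + a k)
    (hxt : ∀ k, xt k = (A (k + 1))⁻¹ • (A k • y k + a k • x k))
    (hyg_mem : ∀ k, yg (k + 1) ∈ s)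
    (hyg_min : ∀ k, ∀ u ∈ s,
      f (xt k) + (inner ℝ (f' (xt k)) (yg (k + 1) - xt k) : ℝ) + h (yg (k + 1))
          + Mseq k / 2 * ‖yg (k + 1) - xt k‖ ^ 2
        ≤ f (xt k) + (inner ℝ (f' (xt k)) (u - xt k) : ℝ) + h u
          + Mseq k / 2 * ‖u - xt k‖ ^ 2)
    (hx_mem : ∀ k, x (k + 1) ∈ s)
    (hx_min : ∀ k, ∀ u ∈ s,
      a k * (f (xt k) + (inner ℝ (f' (xt k)) (x (k + 1) - xt k) : ℝ) + h (x (k + 1)))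
          + 1 / 2 * ‖x (k + 1) - x k‖ ^ 2
        ≤ a k * (f (xt k) + (inner ℝ (f' (xt k)) (u - xt k) : ℝ) + h u)
          + 1 / 2 * ‖u - x k‖ ^ 2)
    (hv : ∀ k, v (k + 1) = Mseq k • (xt k - yg (k + 1)) + f' (yg (k + 1)) - f' (xt k))
    (hne : ∀ k, yg (k + 1) ≠ xt k)
    (hC : ∀ k, C k = max
      (2 * (f (yg (k + 1)) - (f (xt k) + (inner ℝ (f' (xt k)) (yg (k + 1) - xt k) : ℝ)))
        / ‖yg (k + 1) - xt k‖ ^ 2)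
      (‖f' (yg (k + 1)) - f' (xt k)‖ / ‖yg (k + 1) - xt k‖))
    (hCavg : ∀ k, Cavg k = (1 / ((k : ℝ) + 1)) * ∑ j ∈ Finset.range (k + 1), C j)
    (hMsucc : ∀ k, Mseq (k + 1) = max (Cavg k / α) (γ * M))
    (hy : ∀ k, y (k + 1) =
      if 0.9 * Mseq k < C k then (A (k + 1))⁻¹ • (A k • y k + a k • x (k + 1))
      else yg (k + 1))
     :
    ∀ k : ℕ, C k ≤ 0.9 * Mseq k → ∀ u ∈ s,
      A (k + 1) / (72.2 * Mseq k) * ‖v (k + 1)‖ ^ 2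
        ≤ (A k * ((f (y k) + h (y k)) - (f u + h u)) + 1 / 2 * ‖u - x k‖ ^ 2)
          - (A (k + 1) * ((f (y (k + 1)) + h (y (k + 1))) - (f u + h u))
              + 1 / 2 * ‖u - x (k + 1)‖ ^ 2)
          + m / 2 * a k * D ^ 2 :=
  stmt11_general s D hdiam f f' m Mbar hm hMbar hlower h hh γ M α hγ0 hMM x y yg xt v A a Mseq C
    Cavg hx0 hy0 hA0 hM0 ha hA hxt hyg_mem hyg_min hx_mem hx_min hv hC hMsucc hy
end

section
/- In the AC-ACG setting, for every k ≥ 0 the residual v_{k+1} is a generalized stationarity residual at y^g_{k+1}: for every u ∈ s, h(u) ≥ h(y^g_{k+1}) + ⟨v_{k+1} − ∇f(y^g_{k+1}), u − y^g_{k+1}⟩ (i.e., v_{k+1} ∈ ∇f(y^g_{k+1}) + ∂(h + indicator of s)(y^g_{k+1})). -/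
/-!
The point `y^g_{k+1}` minimises over `s` the convex function `h` plus the smooth quadratic model
`q(w) = ⟨∇f(x̃_k), w - x̃_k⟩ + (M_k/2)‖w - x̃_k‖²`. Restricting to the segment from `y^g_{k+1}`
to `u`, convexity bounds `h` by its chord, so `t ↦ q(y^g + t(u - y^g)) + t(h(u) - h(y^g))` has a
minimum on `[0, 1]` at `0`; its right derivative there is nonnegative, i.e.
`h(u) ≥ h(y^g) - ⟨∇q(y^g), u - y^g⟩`, and
`-∇q(y^g) = M_k(x̃_k - y^g) - ∇f(x̃_k) = v_{k+1} - ∇f(y^g)`.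
-/

open Set
open scoped RealInnerProductSpace

theorem ConvexOn.sub_le_of_isMinOn_add {E : Type*} [NormedAddCommGroup E] [NormedSpace ℝ E]
    {s : Set E} {φ q : E → ℝ} {q' : StrongDual ℝ E} {g u : E}
    (hφ : ConvexOn ℝ s φ) (hmin : IsMinOn (φ + q) s g) (hg : g ∈ s) (hu : u ∈ s)
    (hq : HasFDerivAt q q' g) :
    φ g - q' (u - g) ≤ φ u := by
  set ψ : ℝ → ℝ := fun t ↦ q (g + t • (u - g)) + t * (φ u - φ g)
  have hψ_min : IsMinOn ψ (Icc 0 1) 0 := by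
    rintro t ⟨ht₀, ht₁⟩
    have hcomb : (1 - t) • g + t • u = g + t • (u - g) := by module
    have hconv := hφ.2 hg hu (sub_nonneg.2 ht₁) ht₀ (sub_add_cancel 1 t)
    have hle := isMinOn_iff.1 hmin _ (hφ.1 hg hu (sub_nonneg.2 ht₁) ht₀ (sub_add_cancel 1 t))
    rw [hcomb] at hconv hle
    simp only [Pi.add_apply, smul_eq_mul] at hconv hle
    simp only [ψ, zero_smul, add_zero, zero_mul, mem_ofPred_eq]
    linarith
  have hψ_deriv : HasDerivAt ψ (q' (u - g) + (φ u - φ g)) 0 := by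
    have hline : HasDerivAt (fun t : ℝ ↦ g + t • (u - g)) (u - g) 0 := by
      simpa using ((hasDerivAt_id (0 : ℝ)).smul_const (u - g)).const_add g
    have hq0 : HasFDerivAt q q' (g + (0 : ℝ) • (u - g)) := by rwa [zero_smul, add_zero]
    exact (hq0.comp_hasDerivAt 0 hline).add (hasDerivAt_mul_const (φ u - φ g))
  have hdir : (1 : ℝ) ∈ posTangentConeAt (Icc 0 1) 0 :=
    mem_posTangentConeAt_of_segment_subset (by simp [segment_eq_Icc])
  have hslope :=
    hψ_min.localize.hasFDerivWithinAt_nonneg hψ_deriv.hasFDerivAt.hasFDerivWithinAt hdir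
  rw [ContinuousLinearMap.toSpanSingleton_apply, one_smul] at hslope
  linarith

theorem ConvexOn.add_inner_le_of_isMin_proxLinear {E : Type*} [NormedAddCommGroup E]
    [InnerProductSpace ℝ E] {s : Set E} {h : E → ℝ} {p z g u : E} {c : ℝ}
    (hh : ConvexOn ℝ s h) (hg : g ∈ s)
    (hmin : ∀ w ∈ s,
      ⟪p, g - z⟫ + h g + c / 2 * ‖g - z‖ ^ 2 ≤ ⟪p, w - z⟫ + h w + c / 2 * ‖w - z‖ ^ 2)
    (hu : u ∈ s) :
    h g + ⟪c • (z - g) - p, u - g⟫ ≤ h u := by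
  have hsub := (hasFDerivAt_id (𝕜 := ℝ) g).sub_const z
  have hq := ((innerSL ℝ p).hasFDerivAt.comp g hsub).add (hsub.norm_sq.const_mul (c / 2))
  have hopt := hh.sub_le_of_isMinOn_add (fun w hw ↦ by
    simp only [mem_ofPred_eq, Pi.add_apply, Function.comp_apply, id, innerSL_apply_apply]
    linarith [hmin w hw]) hg hu hq
  simp only [add_apply, smul_apply, ContinuousLinearMap.comp_id, innerSL_apply_apply, id,
    smul_eq_mul, nsmul_eq_mul] at hopt
  rw [inner_sub_left, real_inner_smul_left, ← neg_sub g z, inner_neg_left]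
  linarith

theorem stmt14_general {E : Type*} [NormedAddCommGroup E] [InnerProductSpace ℝ E]
    (s : Set E)
    (f : E → ℝ) (f' : E → E)
    (h : E → ℝ) (hh : ConvexOn ℝ s h)
    (yg xt v : ℕ → E) (Mseq : ℕ → ℝ)
    (hyg_mem : ∀ k, yg (k + 1) ∈ s)
    (hyg_min : ∀ k, ∀ u ∈ s,
      f (xt k) + (inner ℝ (f' (xt k)) (yg (k + 1) - xt k) : ℝ) + h (yg (k + 1))
          + Mseq k / 2 * ‖yg (k + 1) - xt k‖ ^ 2
        ≤ f (xt k) + (inner ℝ (f' (xt k)) (u - xt k) : ℝ) + h u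
          + Mseq k / 2 * ‖u - xt k‖ ^ 2)
    (hv : ∀ k, v (k + 1) = Mseq k • (xt k - yg (k + 1)) + f' (yg (k + 1)) - f' (xt k))
     :
    ∀ k : ℕ, ∀ u ∈ s,
      h u ≥ h (yg (k + 1)) +
        (inner ℝ (v (k + 1) - f' (yg (k + 1))) (u - yg (k + 1)) : ℝ) := by
  intro k u hu
  have hresidual : v (k + 1) - f' (yg (k + 1)) = Mseq k • (xt k - yg (k + 1)) - f' (xt k) := by
    rw [hv k]
    abel
  rw [ge_iff_le, hresidual]
  exact hh.add_inner_le_of_isMin_proxLinear (hyg_mem k)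
    (fun w hw ↦ by linarith [hyg_min k w hw]) hu

/-- Theorem 1(a): v_{k+1} is a generalized stationarity residual at y^g_{k+1}. -/
theorem stmt14 {E : Type*} [NormedAddCommGroup E] [InnerProductSpace ℝ E]
    (s : Set E) (hs : Convex ℝ s) (hsne : s.Nonempty)
    (D : ℝ) (hD : 0 < D) (hdiam : ∀ u ∈ s, ∀ u' ∈ s, ‖u - u'‖ ≤ D)
    (f : E → ℝ) (f' : E → E) (hf : ∀ z : E, HasFDerivAt f ((innerSL ℝ) (f' z)) z)
    (m Mbar : ℝ) (hm : 0 ≤ m) (hMbar : 0 < Mbar)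
    (hlower : ∀ u ∈ s, ∀ u' ∈ s,
      -(m / 2) * ‖u - u'‖ ^ 2 ≤ f u - f u' - (inner ℝ (f' u') (u - u') : ℝ))
    (hlip : ∀ u ∈ s, ∀ u' ∈ s, ‖f' u - f' u'‖ ≤ Mbar * ‖u - u'‖)
    (h : E → ℝ) (hh : ConvexOn ℝ s h)
    (γ M α : ℝ) (hγ0 : 0 < γ) (hγ1 : γ < 1) (hMM : Mbar ≤ M)
    (hα : α = 0.9 / 8 * (1 + 1 / (0.9 * γ))⁻¹)
    (x y yg xt v : ℕ → E) (A a Mseq C Cavg : ℕ → ℝ)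
    (hx0 : x 0 ∈ s) (hy0 : y 0 = x 0) (hA0 : A 0 = 0) (hM0 : Mseq 0 = γ * M)
    (ha : ∀ k, a k = (1 + Real.sqrt (1 + 4 * Mseq k * A k)) / (2 * Mseq k))
    (hA : ∀ k, A (k + 1) = A k + a k)
    (hxt : ∀ k, xt k = (A (k + 1))⁻¹ • (A k • y k + a k • x k))
    (hyg_mem : ∀ k, yg (k + 1) ∈ s)
    (hyg_min : ∀ k, ∀ u ∈ s,
      f (xt k) + (inner ℝ (f' (xt k)) (yg (k + 1) - xt k) : ℝ) + h (yg (k + 1))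
          + Mseq k / 2 * ‖yg (k + 1) - xt k‖ ^ 2
        ≤ f (xt k) + (inner ℝ (f' (xt k)) (u - xt k) : ℝ) + h u
          + Mseq k / 2 * ‖u - xt k‖ ^ 2)
    (hx_mem : ∀ k, x (k + 1) ∈ s)
    (hx_min : ∀ k, ∀ u ∈ s,
      a k * (f (xt k) + (inner ℝ (f' (xt k)) (x (k + 1) - xt k) : ℝ) + h (x (k + 1)))
          + 1 / 2 * ‖x (k + 1) - x k‖ ^ 2
        ≤ a k * (f (xt k) + (inner ℝ (f' (xt k)) (u - xt k) : ℝ) + h u)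
          + 1 / 2 * ‖u - x k‖ ^ 2)
    (hv : ∀ k, v (k + 1) = Mseq k • (xt k - yg (k + 1)) + f' (yg (k + 1)) - f' (xt k))
    (hne : ∀ k, yg (k + 1) ≠ xt k)
    (hC : ∀ k, C k = max
      (2 * (f (yg (k + 1)) - (f (xt k) + (inner ℝ (f' (xt k)) (yg (k + 1) - xt k) : ℝ)))
        / ‖yg (k + 1) - xt k‖ ^ 2)
      (‖f' (yg (k + 1)) - f' (xt k)‖ / ‖yg (k + 1) - xt k‖))
    (hCavg : ∀ k, Cavg k = (1 / ((k : ℝ) + 1)) * ∑ j ∈ Finset.range (k + 1), C j)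
    (hMsucc : ∀ k, Mseq (k + 1) = max (Cavg k / α) (γ * M))
    (hy : ∀ k, y (k + 1) =
      if 0.9 * Mseq k < C k then (A (k + 1))⁻¹ • (A k • y k + a k • x (k + 1))
      else yg (k + 1))
     :
    ∀ k : ℕ, ∀ u ∈ s,
      h u ≥ h (yg (k + 1)) +
        (inner ℝ (v (k + 1) - f' (yg (k + 1))) (u - yg (k + 1)) : ℝ) :=
  stmt14_general s f f' h hh yg xt v Mseq hyg_mem hyg_min hv
end
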